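/- arXiv:2509.06671 — 2 statements merged into one kernel-verified Lean document; each statement's English description precedes it below -/
import Mathlib

section
/- Let n ≥ 1, q ∈ ℝ, and m ∈ ℕ. Then there exist real constants c₀, c₁, …, c_m depending only on n, q and m such that for every x ∈ ℝⁿ: (−Δ)^m (1 + ‖x‖²)^{−q/2} = Σ_{k=0}^{m} c_k (1 + ‖x‖²)^{−(q + 2m + 2k)/2}, where (−Δ)^m denotes the m-fold iteration of the negative Laplacian Δf = Σ_{j=1}^n ∂²f/∂x_j². -/
open scoped BigOperators

/-- The negative Laplacian `(-Δ)f(x) = -∑_{j=1}^n ∂²f/∂x_j²(x)` as an operator on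
functions on `ℝⁿ`. -/
noncomputable def negLap {n : ℕ} :
    (EuclideanSpace ℝ (Fin n) → ℝ) → (EuclideanSpace ℝ (Fin n) → ℝ) :=
  fun f x =>
    -∑ j : Fin n,
      fderiv ℝ (fderiv ℝ f) x (EuclideanSpace.single j 1) (EuclideanSpace.single j 1)

/-!
Write `ρ = 1 + ‖x‖²`. Since `∇ρ^s = 2s ρ^{s-1} x` and `‖x‖² = ρ - 1`, one computes
`Δ ρ^s = (2sn + 4s(s-1)) ρ^{s-1} - 4s(s-1) ρ^{s-2}`. Hence `-Δ` maps the span of the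
`ρ^{r-m-k}`, `k ≤ m`, into the span of the `ρ^{r-(m+1)-k}`, `k ≤ m+1`, and induction on `m`
with `r = -q/2` gives the claim. The operator `negLap` is `-Δ` for Mathlib's Laplacian,
whose linearity on `C²` functions lets `-Δ` pass through these spans.
-/

open InnerProductSpace Laplacian Submodule
open scoped RealInnerProductSpace

theorem negLap_eq_neg_laplacian {n : ℕ} (f : EuclideanSpace ℝ (Fin n) → ℝ) :
    negLap f = -Δ f := by
  ext x
  simp [negLap, laplacian_eq_iteratedFDeriv_orthonormalBasis f (EuclideanSpace.basisFun _ ℝ),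
    iteratedFDeriv_two_apply]

section
variable {E F : Type*} [NormedAddCommGroup E] [InnerProductSpace ℝ E] [FiniteDimensional ℝ E]
  [NormedAddCommGroup F] [NormedSpace ℝ F]

theorem laplacian_mem_of_mem_span {S : Set (E → F)} {T : Submodule ℝ (E → F)}
    (hS : ∀ g ∈ S, ContDiff ℝ 2 g ∧ Δ g ∈ T) {f : E → F} (hf : f ∈ span ℝ S) : Δ f ∈ T := by
  suffices ContDiff ℝ 2 f ∧ Δ f ∈ T from this.2
  induction hf using Submodule.span_induction with
  | mem g hg => exact hS g hg
  | zero =>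
    exact ⟨contDiff_const, (laplacian_const (E := E) (c := (0 : F))).symm ▸ zero_mem T⟩
  | add f g _ _ hf hg =>
    have hadd : Δ (f + g) = Δ f + Δ g := funext fun _ =>
      hf.1.contDiffAt.laplacian_add hg.1.contDiffAt
    exact ⟨hf.1.add hg.1, hadd ▸ add_mem hf.2 hg.2⟩
  | smul a f _ hf =>
    have hsmul : Δ (a • f) = a • Δ f := funext fun _ => laplacian_smul a hf.1.contDiffAt
    exact ⟨hf.1.const_smul a, hsmul ▸ smul_mem _ a hf.2⟩
end

section
variable {E : Type*} [NormedAddCommGroup E] [InnerProductSpace ℝ E]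

/-- `oneAddNormSqRpow s x = ⟨x⟩^{2s}`. -/
noncomputable def oneAddNormSqRpow (s : ℝ) (x : E) : ℝ := (1 + ‖x‖ ^ 2) ^ s

theorem contDiff_oneAddNormSqRpow (s : ℝ) {k : WithTop ℕ∞} :
    ContDiff ℝ k (oneAddNormSqRpow (E := E) s) :=
  contDiff_iff_contDiffAt.2 fun _ =>
    (contDiff_const.add (contDiff_norm_sq ℝ)).contDiffAt.rpow_const_of_ne (by positivity)

theorem hasFDerivAt_oneAddNormSqRpow (s : ℝ) (x : E) :
    HasFDerivAt (oneAddNormSqRpow s)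
      ((2 * s * oneAddNormSqRpow (s - 1) x) • innerSL ℝ x) x := by
  have h := ((hasStrictFDerivAt_norm_sq x).hasFDerivAt.const_add 1).rpow_const
    (p := s) (Or.inl (by positivity))
  refine h.congr_fderiv ?_
  rw [two_smul, smul_add, ← add_smul, oneAddNormSqRpow]
  ring_nf

theorem fderiv_oneAddNormSqRpow (s : ℝ) :
    fderiv ℝ (oneAddNormSqRpow (E := E) s)
      = fun x => (2 * s * oneAddNormSqRpow (s - 1) x) • innerSL ℝ x :=
  funext fun x => (hasFDerivAt_oneAddNormSqRpow s x).fderiv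

theorem fderiv_fderiv_oneAddNormSqRpow_apply (s : ℝ) (x v w : E) :
    fderiv ℝ (fderiv ℝ (oneAddNormSqRpow s)) x v w
      = 4 * s * (s - 1) * oneAddNormSqRpow (s - 2) x * ⟪x, v⟫ * ⟪x, w⟫
        + 2 * s * oneAddNormSqRpow (s - 1) x * ⟪v, w⟫ := by
  have hc := ((hasFDerivAt_oneAddNormSqRpow (s - 1) x).const_mul (2 * s))
  have h : HasFDerivAt (fun y : E => (2 * s * oneAddNormSqRpow (s - 1) y) • innerSL ℝ y) _ x :=
    hc.smul (innerSL ℝ : E →L[ℝ] E →L[ℝ] ℝ).hasFDerivAt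
  rw [fderiv_oneAddNormSqRpow, h.fderiv]
  have hvw : (innerSL ℝ : E →L[ℝ] E →L[ℝ] ℝ) v w = ⟪v, w⟫ := rfl
  simp only [add_apply, smul_apply, ContinuousLinearMap.smulRight_apply, smul_eq_mul,
    innerSL_apply_apply, hvw, show s - 1 - 1 = s - 2 by ring]
  ring

omit [InnerProductSpace ℝ E] in
theorem oneAddNormSqRpow_add_one (t : ℝ) (x : E) :
    oneAddNormSqRpow (t + 1) x = (1 + ‖x‖ ^ 2) * oneAddNormSqRpow t x := by
  rw [oneAddNormSqRpow, oneAddNormSqRpow, Real.rpow_add_one (by positivity), mul_comm]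

theorem laplacian_oneAddNormSqRpow [FiniteDimensional ℝ E] (s : ℝ) :
    Δ (oneAddNormSqRpow (E := E) s)
      = (2 * s * Module.finrank ℝ E + 4 * s * (s - 1)) • oneAddNormSqRpow (s - 1)
        - (4 * s * (s - 1)) • oneAddNormSqRpow (s - 2) := by
  ext x
  let b := stdOrthonormalBasis ℝ E
  have hx : ∑ i, ⟪x, b i⟫ * ⟪x, b i⟫ = ‖x‖ ^ 2 := by
    simp_rw [← sq, b.sum_sq_inner_left]
  have hb : ∑ i, ⟪b i, b i⟫ = (Module.finrank ℝ E : ℝ) := by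
    simp [b.orthonormal.1]
  have hρ := oneAddNormSqRpow_add_one (s - 2) x
  rw [show s - 2 + 1 = s - 1 by ring] at hρ
  simp only [laplacian_eq_iteratedFDeriv_orthonormalBasis _ b, iteratedFDeriv_two_apply,
    Matrix.cons_val_zero, Matrix.cons_val_one, fderiv_fderiv_oneAddNormSqRpow_apply,
    Finset.sum_add_distrib, mul_assoc, ← Finset.mul_sum, hx, hb]
  simp only [Pi.sub_apply, Pi.smul_apply, smul_eq_mul, hρ]
  ring

variable [FiniteDimensional ℝ E]

theorem neg_laplacian_oneAddNormSqRpow_mem_span (r : ℝ) (m : ℕ) (k : Fin (m + 1)) :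
    -Δ (oneAddNormSqRpow (E := E) (r - m - k))
      ∈ span ℝ (Set.range fun j : Fin (m + 2) =>
          oneAddNormSqRpow (E := E) (r - (m + 1 : ℕ) - j)) := by
  rw [laplacian_oneAddNormSqRpow, neg_sub]
  refine sub_mem (smul_mem _ _ (subset_span ⟨k.succ, ?_⟩))
    (smul_mem _ _ (subset_span ⟨k.castSucc, ?_⟩)) <;>
  · simp only [Fin.val_succ, Fin.val_castSucc]
    push_cast
    ring_nf

theorem neg_laplacian_iterate_oneAddNormSqRpow_mem_span (r : ℝ) (m : ℕ) :
    (fun f : E → ℝ => -Δ f)^[m] (oneAddNormSqRpow r)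
      ∈ span ℝ (Set.range fun k : Fin (m + 1) => oneAddNormSqRpow (E := E) (r - m - k)) := by
  induction m with
  | zero => exact subset_span ⟨0, by simp⟩
  | succ m ih =>
    rw [Function.iterate_succ_apply']
    refine neg_mem (laplacian_mem_of_mem_span ?_ ih)
    rintro _ ⟨k, rfl⟩
    exact ⟨contDiff_oneAddNormSqRpow _,
      neg_mem_iff.1 (neg_laplacian_oneAddNormSqRpow_mem_span r m k)⟩
end

theorem iterated_neg_laplacian_japanese_bracket_general (n : ℕ) (q : ℝ) (m : ℕ) :
    ∃ c : Fin (m + 1) → ℝ,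
      ∀ x : EuclideanSpace ℝ (Fin n),
        (negLap^[m] (fun y : EuclideanSpace ℝ (Fin n) => (1 + ‖y‖ ^ 2) ^ (-q / 2))) x
          = ∑ k : Fin (m + 1),
              c k * (1 + ‖x‖ ^ 2) ^ (-(q + 2 * (m : ℝ) + 2 * (k : ℝ)) / 2) := by
  obtain ⟨c, hc⟩ := (mem_span_range_iff_exists_fun ℝ).1
    (neg_laplacian_iterate_oneAddNormSqRpow_mem_span (E := EuclideanSpace ℝ (Fin n)) (-q / 2) m)
  refine ⟨c, fun x => ?_⟩
  have hnegLap : negLap = fun f : EuclideanSpace ℝ (Fin n) → ℝ => -Δ f :=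
    funext negLap_eq_neg_laplacian
  calc _ = (∑ k, c k • oneAddNormSqRpow (-q / 2 - m - k)) x := by rw [hc, hnegLap]; rfl
    _ = _ := by
      simp only [Finset.sum_apply, Pi.smul_apply, smul_eq_mul, oneAddNormSqRpow]
      congr! 3
      ring

/-- The iterated negative Laplacian of `⟨x⟩^{-q} = (1+‖x‖²)^{-q/2}` is a linear
combination of the functions `⟨x⟩^{-q-2m-2k}`, `k = 0, …, m`. -/
theorem iterated_neg_laplacian_japanese_bracket (n : ℕ) (hn : 1 ≤ n) (q : ℝ) (m : ℕ) :
    ∃ c : Fin (m + 1) → ℝ,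
      ∀ x : EuclideanSpace ℝ (Fin n),
        (negLap^[m] (fun y : EuclideanSpace ℝ (Fin n) => (1 + ‖y‖ ^ 2) ^ (-q / 2))) x
          = ∑ k : Fin (m + 1),
              c k * (1 + ‖x‖ ^ 2) ^ (-(q + 2 * (m : ℝ) + 2 * (k : ℝ)) / 2) :=
  iterated_neg_laplacian_japanese_bracket_general n q m
end

section
/- Let n ≥ 1 be an integer, γ ∈ (0,1), θ ∈ [0, 1/2), and assume n − 2 + 2γ(1−θ) > 0 and nγ > n − 2 (i.e. γ > (n−2)/n). Define g(η) = min{(1−γ)η + 2, (2−γ)η + 2θ, (3−γ)η} and h(η) = 1 + g(η)/(n + η − g(η)). Then n + η − g(η) > 0 for every η ≥ 0, and h attains its maximum over [0,∞) at η = 2(1−θ): for every η ≥ 0, h(η) ≤ h(2(1−θ)) = p_c(n, γ, θ). -/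
/-- When `γ > (n-2)/n`, the function `h(η) = 1 + g(η)/(n+η-g(η))` is well defined for
all `η ≥ 0` and attains its maximum at `η = 2(1-θ)`, with
`h(2(1-θ)) = p_c(n,γ,θ) = 1 + 2(1+(1-γ)(1-θ))/(n-2+2γ(1-θ))`. -/
theorem h_max_at_two_one_sub_theta
    (n : ℕ) (hn : 1 ≤ n) (γ θ : ℝ)
    (hγ : γ ∈ Set.Ioo (0:ℝ) 1) (hθ : θ ∈ Set.Ico (0:ℝ) (1/2))
    (hD : 0 < (n : ℝ) - 2 + 2 * γ * (1 - θ))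
    (hγn : (n : ℝ) * γ > (n : ℝ) - 2)
    (g h : ℝ → ℝ)
    (hg : ∀ η, g η = min ((1 - γ) * η + 2) (min ((2 - γ) * η + 2 * θ) ((3 - γ) * η)))
    (hh : ∀ η, h η = 1 + g η / ((n : ℝ) + η - g η)) :
    (∀ η : ℝ, 0 ≤ η → 0 < (n : ℝ) + η - g η) ∧
    (∀ η : ℝ, 0 ≤ η → h η ≤ h (2 * (1 - θ))) ∧
    h (2 * (1 - θ)) = 1 + 2 * (1 + (1 - γ) * (1 - θ)) / ((n : ℝ) - 2 + 2 * γ * (1 - θ)) := by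
  obtain ⟨hγ0, hγ1⟩ := hγ
  obtain ⟨hθ0, hθ1⟩ := hθ
  have hn1 : (1:ℝ) ≤ n := by exact_mod_cast hn
  -- value of g at η₀ = 2(1-θ)
  have hgη₀ : g (2 * (1 - θ)) = 2 * (1 + (1 - γ) * (1 - θ)) := by
    have h1 : (1 - γ) * (2 * (1 - θ)) + 2 ≤ (2 - γ) * (2 * (1 - θ)) + 2 * θ := by nlinarith
    have h2 : (1 - γ) * (2 * (1 - θ)) + 2 ≤ (3 - γ) * (2 * (1 - θ)) := by nlinarith
    rw [hg, min_eq_left (le_min h1 h2)]; ring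
  have hpos : ∀ η : ℝ, 0 ≤ η → 0 < (n : ℝ) + η - g η := by
    intro η hη
    have h1 : g η ≤ (1 - γ) * η + 2 := by rw [hg]; exact min_le_left _ _
    have h2 : g η ≤ (2 - γ) * η + 2 * θ := by
      rw [hg]; exact (min_le_right _ _).trans (min_le_left _ _)
    by_cases hc : 2 - (n : ℝ) < γ * η
    · linarith
    · push_neg at hc
      -- then (1-γ)η < n - 2θ since γ(1-γ)η ≤ (2-n)(1-γ) < γ(n-2θ)
      have key : (1 - γ) * η < (n : ℝ) - 2 * θ := by
        have h3 : γ * η * (1 - γ) ≤ (2 - (n : ℝ)) * (1 - γ) :=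
          mul_le_mul_of_nonneg_right hc (by linarith)
        have h4 : (2 - (n : ℝ)) * (1 - γ) < γ * ((n : ℝ) - 2 * θ) := by linarith
        have h5 : γ * ((1 - γ) * η) < γ * ((n : ℝ) - 2 * θ) := by linarith
        exact (mul_lt_mul_iff_right₀ hγ0).mp h5
      linarith
  have hB : (0:ℝ) < (n : ℝ) - 2 + 2 * γ * (1 - θ) := hD
  have hBeq : (n : ℝ) + 2 * (1 - θ) - g (2 * (1 - θ)) = (n : ℝ) - 2 + 2 * γ * (1 - θ) := by
    rw [hgη₀]; ring
  refine ⟨hpos, ?_, ?_⟩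
  · intro η hη
    have hD' : 0 < (n : ℝ) + η - g η := hpos η hη
    have key : g η * ((n : ℝ) + 2 * (1 - θ)) ≤
        (2 * (1 + (1 - γ) * (1 - θ))) * ((n : ℝ) + η) := by
      rcases le_or_gt η (2 * (1 - θ)) with hle | hlt
      · have h2 : g η ≤ (2 - γ) * η + 2 * θ := by
          rw [hg]; exact (min_le_right _ _).trans (min_le_left _ _)
        have hnθ : 0 ≤ ((2 - γ) * (n : ℝ) - 2 * θ) * (2 * (1 - θ) - η) := by
          apply mul_nonneg <;> nlinarith
        nlinarith [mul_le_mul_of_nonneg_right h2 (show (0:ℝ) ≤ (n : ℝ) + 2 * (1 - θ) by nlinarith)]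
      · have h1 : g η ≤ (1 - γ) * η + 2 := by rw [hg]; exact min_le_left _ _
        have hslope : ((1 - γ) * (n : ℝ) - 2) * (η - 2 * (1 - θ)) ≤ 0 := by
          apply mul_nonpos_of_nonpos_of_nonneg <;> nlinarith
        nlinarith [mul_le_mul_of_nonneg_right h1 (show (0:ℝ) ≤ (n : ℝ) + 2 * (1 - θ) by nlinarith)]
    have hd : (n : ℝ) + 2 * (1 - θ) - 2 * (1 + (1 - γ) * (1 - θ)) =
        (n : ℝ) - 2 + 2 * γ * (1 - θ) := by ring
    rw [hh η, hh (2 * (1 - θ)), hgη₀, hd]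
    have hdiv : g η / ((n : ℝ) + η - g η) ≤
        (2 * (1 + (1 - γ) * (1 - θ))) / ((n : ℝ) - 2 + 2 * γ * (1 - θ)) := by
      rw [div_le_div_iff₀ hD' hB]
      nlinarith [key]
    linarith
  · have hd : (n : ℝ) + 2 * (1 - θ) - 2 * (1 + (1 - γ) * (1 - θ)) =
        (n : ℝ) - 2 + 2 * γ * (1 - θ) := by ring
    rw [hh, hgη₀, hd]
end
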